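/- For every p > 1 and all real a, b, the quantity K(a,b) = (b-a)^2·(max(|a|,|b|))^{p-2} satisfies K(min(a,1), min(b,1)) ≤ K(a,b) and K(max(a,-1), max(b,-1)) ≤ K(a,b). -/

import Mathlib

/-!
Write `K p a b = ((b - a)^2 / M) * M^(p - 1)` with `M = max |a| |b|`. Truncating at `±1` does
not increase `M`, hence not `M^(p - 1)` since `p ≥ 1`, and it does not increase `(b - a)^2 / M`
either; the latter is an elementary inequality whose only nontrivial case is `a ≤ 1 ≤ b`. The
truncation at `-1` is the truncation at `1` conjugated by `x ↦ -x`, under which `K` is invariant.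
-/

noncomputable def K (p a b : ℝ) : ℝ := (b - a) ^ 2 * (max |a| |b|) ^ (p - 2)

open Real

lemma mul_rpow_le_mul_rpow_of_mul_le_mul {u v m M s : ℝ} (hs : -1 ≤ s) (hm : 0 < m)
    (hmM : m ≤ M) (hv : 0 ≤ v) (h : u * M ≤ v * m) : u * m ^ s ≤ v * M ^ s := by
  have hM : 0 < M := hm.trans_le hmM
  calc u * m ^ s = u / m * m ^ (s + 1) := by
        rw [rpow_add hm, rpow_one]; field_simp
    _ ≤ v / M * M ^ (s + 1) :=
        mul_le_mul ((div_le_div_iff₀ hm hM).2 h) (rpow_le_rpow hm.le hmM (by linarith))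
          (rpow_nonneg hm.le _) (div_nonneg hv hM.le)
    _ = v * M ^ s := by
        rw [rpow_add hM, rpow_one]; field_simp

lemma K_nonneg (p a b : ℝ) : 0 ≤ K p a b :=
  mul_nonneg (sq_nonneg _) (rpow_nonneg ((abs_nonneg a).trans (le_max_left _ _)) _)

lemma K_self (p a : ℝ) : K p a a = 0 := by
  simp [K]

lemma K_comm (p a b : ℝ) : K p a b = K p b a := by
  rw [K, K, max_comm, ← neg_sub, neg_sq]

lemma K_neg_neg (p a b : ℝ) : K p (-a) (-b) = K p a b := by
  rw [K, K, abs_neg, abs_neg, neg_sub_neg, ← neg_sub, neg_sq]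

lemma sq_mul_max_le_of_le_one_le {a b : ℝ} (ha : a ≤ 1) (hb : 1 ≤ b) :
    (1 - a) ^ 2 * max |a| b ≤ (b - a) ^ 2 * max |a| 1 := by
  have h1a : (1 - a) ^ 2 ≤ (b - a) ^ 2 := pow_le_pow_left₀ (by linarith) (by linarith) 2
  rw [mul_max_of_nonneg _ _ (sq_nonneg _)]
  refine max_le ?_ ?_
  · exact mul_le_mul h1a (le_max_left _ _) (abs_nonneg a) (sq_nonneg _)
  · rcases le_or_gt |a| 1 with h | h
    · rw [max_eq_right h]
      obtain ⟨ha₁, -⟩ := abs_le.mp h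
      -- `(b - a)^2 - b (1 - a)^2 = (b - 1)^2 + (b - 1)(1 - a)(1 + a)`
      nlinarith [mul_nonneg (sub_nonneg.2 hb)
        (mul_nonneg (sub_nonneg.2 ha) (by linarith : 0 ≤ 1 + a))]
    · rw [max_eq_left h.le]
      have ha₁ : a < -1 := by
        rcases abs_cases a with ⟨h', -⟩ | ⟨h', -⟩ <;> linarith
      rw [abs_of_neg (by linarith)]
      nlinarith [mul_nonneg (sub_nonneg.2 hb) (by linarith : 0 ≤ -1 - a),
        mul_nonneg (mul_nonneg (sub_nonneg.2 hb) (by linarith : 0 ≤ -1 - a))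
          (by linarith : 0 ≤ b - a)]

lemma K_min_one_le (p : ℝ) (hp : 1 ≤ p) (a b : ℝ) : K p (min a 1) (min b 1) ≤ K p a b := by
  wlog hab : a ≤ b generalizing a b
  · rw [K_comm, K_comm p a]; exact this b a (le_of_not_ge hab)
  rcases le_total b 1 with hb | hb
  · rw [min_eq_left hb, min_eq_left (hab.trans hb)]
  rcases le_total 1 a with ha | ha
  · rw [min_eq_right ha, min_eq_right hb, K_self]; exact K_nonneg p a b
  rw [min_eq_left ha, min_eq_right hb, K, K, abs_one, abs_of_nonneg (zero_le_one.trans hb)]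
  exact mul_rpow_le_mul_rpow_of_mul_le_mul (by linarith) (lt_max_of_lt_right one_pos)
    (max_le_max le_rfl hb) (sq_nonneg _) (sq_mul_max_le_of_le_one_le ha hb)

theorem K_contraction (p : ℝ) (hp : 1 < p) (a b : ℝ) :
    K p (min a 1) (min b 1) ≤ K p a b ∧
    K p (max a (-1)) (max b (-1)) ≤ K p a b := by
  refine ⟨K_min_one_le p hp.le a b, ?_⟩
  have max_neg_one (x : ℝ) : max x (-1) = -min (-x) 1 := by
    rw [← neg_neg (1 : ℝ), min_neg_neg, neg_neg, neg_neg]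
  rw [max_neg_one, max_neg_one, K_neg_neg, ← K_neg_neg p a b]
  exact K_min_one_le p hp.le (-a) (-b)
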